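/- Let Π₁ = (𝒜, ℛ₁) and Π₂ = (𝒜, ℛ₂) be two logic programs (over a finite atom domain 𝒜), and let Π₁' = (𝒜, ∅, ℛ₁) and Π₂' = (𝒜, ∅, ℛ₂) be the epistemic logic programs with the same rule sets and empty epistemic-literal domain. Then Π₁ and Π₂ are strongly equivalent as logic programs if and only if Π₁' and Π₂' are strongly equivalent as epistemic logic programs (i.e., strongly ELP-CWV-equivalent). -/

import Mathlib

variable {V : Type}

/-- A (default-negation) literal: an atom or its default negation. -/
inductive Lit (V : Type) : Type
  | pos (a : V) : Lit V
  | neg (a : V) : Lit V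

namespace Lit

/-- `I ⊨ ℓ`. -/
def sat (I : Set V) : Lit V → Prop
  | pos a => a ∈ I
  | neg a => a ∉ I

/-- The complementary literal (so that `I ⊨ ¬ℓ` iff `I ⊨ ℓ.flip`). -/
def flip : Lit V → Lit V
  | pos a => neg a
  | neg a => pos a

/-- The underlying atom of a literal. -/
def atom : Lit V → V
  | pos a => a
  | neg a => a

end Lit

/-- A standard (ASP) rule `head ← pos, {¬ℓ | ℓ ∈ neg}`; the set `neg` collects the
literals occurring under one extra default negation in the body (so an atom `a ∈ pos`
is a positive body atom, `Lit.pos c ∈ neg` encodes the body element `¬c`, and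
`Lit.neg d ∈ neg` encodes the doubly negated body element `¬¬d`). -/
structure Rule (V : Type) : Type where
  head : Set V
  pos : Set V
  neg : Set (Lit V)

namespace Rule

/-- The rule only uses atoms from `A`. -/
def wf (r : Rule V) (A : Set V) : Prop :=
  r.head ⊆ A ∧ r.pos ⊆ A ∧ ∀ ℓ ∈ r.neg, ℓ.atom ∈ A

/-- `I` is a model of the rule. -/
def sat (I : Set V) (r : Rule V) : Prop :=
  (r.pos ⊆ I ∧ ∀ ℓ ∈ r.neg, ¬ ℓ.sat I) → ∃ a ∈ r.head, a ∈ I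

/-- `X` satisfies the GL-reduct of the rule w.r.t. `Y`: if the rule survives the
reduct (no negated body literal is satisfied by `Y`), then `X` satisfies the
remaining rule `head ← pos`. -/
def redSat (Y X : Set V) (r : Rule V) : Prop :=
  (∀ ℓ ∈ r.neg, ¬ ℓ.sat Y) → (r.pos ⊆ X → ∃ a ∈ r.head, a ∈ X)

end Rule

/-- A ground logic program `(𝒜, ℛ)`. -/
structure Program (V : Type) : Type where
  A : Set V
  R : Set (Rule V)

namespace Program

def wf (P : Program V) : Prop := ∀ r ∈ P.R, r.wf P.A

/-- `I ⊨ P`. -/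
def model (P : Program V) (I : Set V) : Prop := ∀ r ∈ P.R, r.sat I

/-- `X ⊨ P^Y` (the GL-reduct). -/
def redModel (P : Program V) (Y X : Set V) : Prop := ∀ r ∈ P.R, r.redSat Y X

/-- `M` is an answer set of `P`. -/
def answerSet (P : Program V) (M : Set V) : Prop :=
  M ⊆ P.A ∧ P.model M ∧ ¬ ∃ M', M' ⊂ M ∧ P.redModel M M'

/-- `AS(P)`, the set of answer sets. -/
def AS (P : Program V) : Set (Set V) := {M | P.answerSet M}

/-- The set of SE-models `(X,Y)` with `X ⊆ Y ⊆ 𝒜`, `Y ⊨ P` and `X ⊨ P^Y`. -/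
def SE (P : Program V) : Set (Set V × Set V) :=
  {p | p.1 ⊆ p.2 ∧ p.2 ⊆ P.A ∧ P.model p.2 ∧ P.redModel p.2 p.1}

/-- Componentwise union of programs. -/
def union (P₁ P₂ : Program V) : Program V := ⟨P₁.A ∪ P₂.A, P₁.R ∪ P₂.R⟩

/-- Strong equivalence of plain logic programs. -/
def strongEq (P₁ P₂ : Program V) : Prop :=
  ∀ P : Program V, P.wf → (P₁.union P).AS = (P₂.union P).AS

end Program

/-- An ELP rule `head ← opos, ¬oneg, not epos, ¬ not eneg`: epistemic literals `not ℓ`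
are identified with the literal `ℓ` they negate; `epos` collects the literals occurring
under plain epistemic negation and `eneg` those occurring under default-negated
epistemic negation. -/
structure ERule (V : Type) : Type where
  head : Set V
  opos : Set V
  oneg : Set (Lit V)
  epos : Set (Lit V)
  eneg : Set (Lit V)

namespace ERule

/-- The rule only uses atoms from `A` and epistemic literals from `E`. -/
def wf (r : ERule V) (A : Set V) (E : Set (Lit V)) : Prop :=
  r.head ⊆ A ∧ r.opos ⊆ A ∧ (∀ ℓ ∈ r.oneg, ℓ.atom ∈ A) ∧ r.epos ⊆ E ∧ r.eneg ⊆ E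

/-- The rule of the epistemic reduct w.r.t. guess `Φ` (meaningful when no `eneg`
literal belongs to `Φ`, in which case: epistemic literals `not ℓ ∈ Φ` become `⊤`,
the remaining `not ℓ` in `epos` become `¬ℓ`, and `¬ not ℓ` in `eneg` becomes `¬¬ℓ`,
i.e. `¬(ℓ.flip)`, reading triple negations as single ones). -/
def reduct (r : ERule V) (Φ : Set (Lit V)) : Rule V :=
  ⟨r.head, r.opos, r.oneg ∪ (r.epos \ Φ) ∪ (Lit.flip '' r.eneg)⟩

/-- The underlying plain rule of an epistemic-negation-free ELP rule. -/
def toRule (r : ERule V) : Rule V := ⟨r.head, r.opos, r.oneg⟩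

end ERule

/-- A plain rule viewed as an ELP rule. -/
def Rule.toERule (r : Rule V) : ERule V := ⟨r.head, r.pos, r.neg, ∅, ∅⟩

/-- An epistemic logic program `(𝒜, ℰ, ℛ)`. -/
structure ELP (V : Type) : Type where
  A : Set V
  E : Set (Lit V)
  R : Set (ERule V)

/-- `I` is `Φ`-compatible w.r.t. `E`. -/
def compatible (E Φ : Set (Lit V)) (I : Set (Set V)) : Prop :=
  I.Nonempty ∧ (∀ ℓ ∈ Φ, ∃ J ∈ I, ¬ ℓ.sat J) ∧ (∀ ℓ ∈ E \ Φ, ∀ J ∈ I, ℓ.sat J)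

/-- `Φ` is realizable in the set `I` of interpretations (w.r.t. `E`). -/
def realizableIn (E Φ : Set (Lit V)) (I : Set (Set V)) : Prop :=
  ∃ I', I' ⊆ I ∧ compatible E Φ I'

/-- A guess `Φ` is consistent w.r.t. `E`: whenever `E` contains both `not a` and
`not ¬a`, `Φ` contains at least one of them. -/
def consistentGuess (E Φ : Set (Lit V)) : Prop :=
  ∀ a : V, Lit.pos a ∈ E → Lit.neg a ∈ E → (Lit.pos a ∈ Φ ∨ Lit.neg a ∈ Φ)

namespace ELP

/-- Well-formedness: `E` consists of epistemic literals over `A`, and every rule is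
over `A` and `E`. -/
def wf (P : ELP V) : Prop :=
  (∀ ℓ ∈ P.E, ℓ.atom ∈ P.A) ∧ ∀ r ∈ P.R, r.wf P.A P.E

/-- An epistemic-negation-free (plain ASP) program viewed as an ELP. -/
def isASP (P : ELP V) : Prop := P.E = ∅ ∧ ∀ r ∈ P.R, r.epos = ∅ ∧ r.eneg = ∅

/-- Componentwise union of ELPs. -/
def union (P₁ P₂ : ELP V) : ELP V := ⟨P₁.A ∪ P₂.A, P₁.E ∪ P₂.E, P₁.R ∪ P₂.R⟩

/-- The epistemic reduct `P^Φ`: rules with some `eneg` literal in `Φ` are deleted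
(their body contains `¬⊤`), the remaining rules are reduced. -/
def eReduct (P : ELP V) (Φ : Set (Lit V)) : Program V :=
  ⟨P.A, {q | ∃ r ∈ P.R, (∀ ℓ ∈ r.eneg, ℓ ∉ Φ) ∧ q = r.reduct Φ}⟩

/-- `M` is a candidate world view of `P` w.r.t. the guess `Φ`. -/
def isCWVwrt (P : ELP V) (Φ : Set (Lit V)) (M : Set (Set V)) : Prop :=
  Φ ⊆ P.E ∧ M = (P.eReduct Φ).AS ∧ compatible P.E Φ M

/-- `M` is a candidate world view of `P`. -/
def isCWV (P : ELP V) (M : Set (Set V)) : Prop := ∃ Φ, P.isCWVwrt Φ M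

/-- `M` is a world view of `P`: a CWV whose associated guess is subset-maximal. -/
def isWV (P : ELP V) (M : Set (Set V)) : Prop :=
  ∃ Φ, P.isCWVwrt Φ M ∧ ∀ Φ' M', P.isCWVwrt Φ' M' → ¬ Φ ⊂ Φ'

/-- `Φ` is realizable in `P`: realizable in the set of models of `P^Φ`. -/
def realizable (P : ELP V) (Φ : Set (Lit V)) : Prop :=
  realizableIn P.E Φ {I | I ⊆ P.A ∧ (P.eReduct Φ).model I}

/-- The SE-function of `P`: `SE(Π^Φ)` if `Φ` is realizable in `P`, and `∅` otherwise. -/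
def SEfun (P : ELP V) (Φ : Set (Lit V)) : Set (Set V × Set V) :=
  {p | P.realizable Φ ∧ p ∈ (P.eReduct Φ).SE}

/-- CWV-equivalence. -/
def cwvEq (P₁ P₂ : ELP V) : Prop := ∀ M, P₁.isCWV M ↔ P₂.isCWV M

/-- WV-equivalence. -/
def wvEq (P₁ P₂ : ELP V) : Prop := ∀ M, P₁.isWV M ↔ P₂.isWV M

/-- Strong ELP-CWV-equivalence. -/
def strongELPCWVEq (P₁ P₂ : ELP V) : Prop :=
  ∀ Q : ELP V, Q.wf → cwvEq (P₁.union Q) (P₂.union Q)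

/-- Strong ELP-WV-equivalence. -/
def strongELPWVEq (P₁ P₂ : ELP V) : Prop :=
  ∀ Q : ELP V, Q.wf → wvEq (P₁.union Q) (P₂.union Q)

/-- Strong ASP-CWV-equivalence. -/
def strongASPCWVEq (P₁ P₂ : ELP V) : Prop :=
  ∀ Q : ELP V, Q.wf → Q.isASP → cwvEq (P₁.union Q) (P₂.union Q)

/-- Strong ASP-WV-equivalence. -/
def strongASPWVEq (P₁ P₂ : ELP V) : Prop :=
  ∀ Q : ELP V, Q.wf → Q.isASP → wvEq (P₁.union Q) (P₂.union Q)

end ELP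

/-- The Gelfond-CWA program `p' ← ¬ not ¬p` over `𝒜 = {p, p'}`, `ℰ = {not p, not ¬p}`. -/
def GelfondCWA (p p' : V) : ELP V :=
  ⟨{p, p'}, {Lit.pos p, Lit.neg p}, {⟨{p'}, ∅, ∅, ∅, {Lit.neg p}⟩}⟩

/-- The Shen-Eiter-CWA program `p' ← not p` over `𝒜 = {p, p'}`, `ℰ = {not p, not ¬p}`. -/
def ShenEiterCWA (p p' : V) : ELP V :=
  ⟨{p, p'}, {Lit.pos p, Lit.neg p}, {⟨{p'}, ∅, ∅, {Lit.pos p}, ∅⟩}⟩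

/-! Both directions rest on one observation: the epistemic reduct of `Π₁' ∪ Q` is
`Π₁ ∪ Q^Φ`, and `Q^Φ` is again a well-formed logic program. Hence strong equivalence of
`Π₁, Π₂` makes the answer sets of the two reducts agree for every guess, and candidate world
views only depend on these answer sets. Conversely, taking `Q = Π'` for a logic program `Π`,
the only guess is `∅` and the candidate world views are exactly the nonempty `AS(Πᵢ ∪ Π)`. -/

def Program.toELP (P : Program V) : ELP V := ⟨P.A, ∅, Rule.toERule '' P.R⟩

@[simp]
lemma Lit.atom_flip (ℓ : Lit V) : ℓ.flip.atom = ℓ.atom := by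
  cases ℓ <;> rfl

@[simp]
lemma Rule.toERule_reduct (r : Rule V) (Φ : Set (Lit V)) : r.toERule.reduct Φ = r := by
  simp [Rule.toERule, ERule.reduct]

namespace ELP

lemma eReduct_union (P Q : ELP V) (Φ : Set (Lit V)) :
    (P.union Q).eReduct Φ = (P.eReduct Φ).union (Q.eReduct Φ) := by
  simp only [union, eReduct, Program.union, Program.mk.injEq, true_and]
  ext q
  simp only [Set.mem_union, Set.mem_ofPred_eq]
  constructor
  · rintro ⟨r, hr | hr, hΦ, rfl⟩
    exacts [.inl ⟨r, hr, hΦ, rfl⟩, .inr ⟨r, hr, hΦ, rfl⟩]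
  · rintro (⟨r, hr, hΦ, rfl⟩ | ⟨r, hr, hΦ, rfl⟩)
    exacts [⟨r, .inl hr, hΦ, rfl⟩, ⟨r, .inr hr, hΦ, rfl⟩]

lemma wf.eReduct {Q : ELP V} (hQ : Q.wf) (Φ : Set (Lit V)) : (Q.eReduct Φ).wf := by
  rintro q ⟨r, hr, -, rfl⟩
  obtain ⟨hhead, hopos, honeg, hepos, heneg⟩ := hQ.2 r hr
  refine ⟨hhead, hopos, ?_⟩
  rintro ℓ ((hℓ | ⟨hℓ, -⟩) | ⟨ℓ, hℓ, rfl⟩)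
  · exact honeg ℓ hℓ
  · exact hQ.1 ℓ (hepos hℓ)
  · simpa [ELP.eReduct] using hQ.1 ℓ (heneg hℓ)

lemma cwvEq_of_E_eq_of_AS_eReduct_eq {P₁ P₂ : ELP V} (hE : P₁.E = P₂.E)
    (hAS : ∀ Φ, (P₁.eReduct Φ).AS = (P₂.eReduct Φ).AS) : cwvEq P₁ P₂ := by
  intro M
  simp only [isCWV, isCWVwrt, hE, hAS]

lemma isCWV_iff_of_E_eq_empty {P : ELP V} (hE : P.E = ∅) (M : Set (Set V)) :
    P.isCWV M ↔ M = (P.eReduct ∅).AS ∧ M.Nonempty := by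
  simp only [isCWV, isCWVwrt, compatible, hE, Set.subset_empty_iff]
  constructor
  · rintro ⟨_, rfl, hM, hne, -⟩
    exact ⟨hM, hne⟩
  · rintro ⟨hM, hne⟩
    exact ⟨∅, rfl, hM, hne, by simp, by simp⟩

/-- An empty `AS(P^∅)` yields no candidate world view, so the two sides are either both
empty or both the unique candidate world view. -/
lemma AS_eReduct_eq_of_cwvEq {P₁ P₂ : ELP V} (hE₁ : P₁.E = ∅) (hE₂ : P₂.E = ∅)
    (h : cwvEq P₁ P₂) : (P₁.eReduct ∅).AS = (P₂.eReduct ∅).AS := by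
  have hcwv := fun M => (isCWV_iff_of_E_eq_empty hE₁ M).symm.trans
    ((h M).trans (isCWV_iff_of_E_eq_empty hE₂ M))
  rcases (P₁.eReduct ∅).AS.eq_empty_or_nonempty with h₁ | h₁
  · rcases (P₂.eReduct ∅).AS.eq_empty_or_nonempty with h₂ | h₂
    · rw [h₁, h₂]
    · exact ((hcwv _).mpr ⟨rfl, h₂⟩).1.symm
  · exact ((hcwv _).mp ⟨rfl, h₁⟩).1

end ELP

namespace Program

@[simp]
lemma toELP_E (P : Program V) : P.toELP.E = ∅ := rfl

@[simp]
lemma toELP_eReduct (P : Program V) (Φ : Set (Lit V)) : P.toELP.eReduct Φ = P := by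
  simp only [toELP, ELP.eReduct]
  congr
  ext q
  constructor
  · rintro ⟨_, ⟨r, hr, rfl⟩, -, rfl⟩
    rwa [Rule.toERule_reduct]
  · intro hq
    exact ⟨q.toERule, ⟨q, hq, rfl⟩, by simp [Rule.toERule], by simp⟩

lemma wf.toELP {P : Program V} (hP : P.wf) : P.toELP.wf := by
  refine ⟨by simp, ?_⟩
  rintro _ ⟨r, hr, rfl⟩
  obtain ⟨hhead, hpos, hneg⟩ := hP r hr
  exact ⟨hhead, hpos, hneg, by simp [Rule.toERule], by simp [Rule.toERule]⟩

end Program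

theorem stmt9_general {V : Type} (A : Set V)
    (R₁ R₂ : Set (Rule V)) :
    Program.strongEq (Program.mk A R₁) (Program.mk A R₂) ↔
      ELP.strongELPCWVEq (ELP.mk A ∅ (Rule.toERule '' R₁))
        (ELP.mk A ∅ (Rule.toERule '' R₂)) := by
  change _ ↔ ELP.strongELPCWVEq (Program.mk A R₁).toELP (Program.mk A R₂).toELP
  constructor
  · intro h Q hQ
    refine ELP.cwvEq_of_E_eq_of_AS_eReduct_eq (by simp [ELP.union]) fun Φ => ?_
    simpa only [ELP.eReduct_union, Program.toELP_eReduct] using h _ (hQ.eReduct Φ)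
  · intro h P hP
    simpa only [ELP.eReduct_union, Program.toELP_eReduct] using
      ELP.AS_eReduct_eq_of_cwvEq (by simp [ELP.union]) (by simp [ELP.union]) (h _ hP.toELP)

/-- Two plain logic programs are strongly equivalent iff the ELPs obtained
from them (with empty epistemic-literal domain) are strongly ELP-CWV-equivalent. -/
theorem stmt9 {V : Type} [Infinite V] (A : Set V) (hA : A.Finite)
    (R₁ R₂ : Set (Rule V))
    (hwf₁ : (Program.mk A R₁).wf) (hwf₂ : (Program.mk A R₂).wf) :
    Program.strongEq (Program.mk A R₁) (Program.mk A R₂) ↔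
      ELP.strongELPCWVEq (ELP.mk A ∅ (Rule.toERule '' R₁))
        (ELP.mk A ∅ (Rule.toERule '' R₂)) :=
  stmt9_general A R₁ R₂
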